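/- arXiv:1307.1737 — 5 statements merged into one kernel-verified Lean document; each statement's English description precedes it below -/
import Mathlib

section
/- Let X be a compact metric space and f : X → X a continuous map. Let ℛ be a finite collection of repellers of f which contains ∅ and X, and is closed under binary union and binary intersection. Then there exists a map k assigning to each R ∈ ℛ a subset k(R) ⊆ X such that: each k(R) is a repelling neighborhood with Inv⁺(k(R)) = R; k(∅) = ∅ and k(X) = X; and for all R, R' ∈ ℛ, k(R ∪ R') = k(R) ∪ k(R') and k(R ∩ R') = k(R) ∩ k(R'). In particular k is injective. -/
open Set

/-- The maximal invariant set in `U`: the union of all subsets `S ⊆ U` with `f '' S = S`. -/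
def MaxInv {Y : Type*} (f : Y → Y) (U : Set Y) : Set Y :=
  ⋃₀ {S : Set Y | S ⊆ U ∧ f '' S = S}

/-- The maximal forward invariant set in `U`: the union of all subsets `S ⊆ U`
with `f '' S ⊆ S`. -/
def MaxInvPlus {Y : Type*} (f : Y → Y) (U : Set Y) : Set Y :=
  ⋃₀ {S : Set Y | S ⊆ U ∧ f '' S ⊆ S}

/-- The omega-limit set `ω(U) = ⋂_{n ≥ 0} cl (⋃_{m ≥ n} f^[m] '' U)`. -/
def OmegaLim {Y : Type*} [TopologicalSpace Y] (f : Y → Y) (U : Set Y) : Set Y :=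
  ⋂ n : ℕ, closure (⋃ m ≥ n, f^[m] '' U)

/-- The alpha-limit set `α(U) = ⋂_{n ≥ 0} cl (⋃_{m ≥ n} (f^[m]) ⁻¹' U)`. -/
def AlphaLim {Y : Type*} [TopologicalSpace Y] (f : Y → Y) (U : Set Y) : Set Y :=
  ⋂ n : ℕ, closure (⋃ m ≥ n, f^[m] ⁻¹' U)

/-- A trapping region: a forward invariant set `U` with `f^[n] '' cl U ⊆ int U`
for some `n ≥ 1`. -/
def IsTrappingRegion {Y : Type*} [TopologicalSpace Y] (f : Y → Y) (U : Set Y) : Prop :=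
  f '' U ⊆ U ∧ ∃ n : ℕ, 1 ≤ n ∧ f^[n] '' closure U ⊆ interior U

/-- An attractor: `A = Inv(U)` for some trapping region `U`. -/
def IsAttractor {Y : Type*} [TopologicalSpace Y] (f : Y → Y) (A : Set Y) : Prop :=
  ∃ U : Set Y, IsTrappingRegion f U ∧ A = MaxInv f U

/-- An attracting neighborhood: `ω(U) ⊆ int U`. -/
def IsAttractingNbhd {Y : Type*} [TopologicalSpace Y] (f : Y → Y) (U : Set Y) : Prop :=
  OmegaLim f U ⊆ interior U

/-- A repelling region: a backward invariant set `U` with `(f^[n]) ⁻¹' cl U ⊆ int U`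
for some `n ≥ 1`. -/
def IsRepellingRegion {Y : Type*} [TopologicalSpace Y] (f : Y → Y) (U : Set Y) : Prop :=
  f ⁻¹' U ⊆ U ∧ ∃ n : ℕ, 1 ≤ n ∧ f^[n] ⁻¹' closure U ⊆ interior U

/-- A repeller: `R = Inv⁺(U)` for some repelling region `U`. -/
def IsRepeller {Y : Type*} [TopologicalSpace Y] (f : Y → Y) (R : Set Y) : Prop :=
  ∃ U : Set Y, IsRepellingRegion f U ∧ R = MaxInvPlus f U

/-- A repelling neighborhood: `α(U) ⊆ int U`. -/
def IsRepellingNbhd {Y : Type*} [TopologicalSpace Y] (f : Y → Y) (U : Set Y) : Prop :=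
  AlphaLim f U ⊆ interior U

/-- A backward orbit: a sequence `γ : ℕ → Y` with `f (γ (k+1)) = γ k` for all `k`.
A backward orbit through `x` additionally satisfies `γ 0 = x`. -/
def IsBackwardOrbit {Y : Type*} (f : Y → Y) (γ : ℕ → Y) : Prop :=
  ∀ k : ℕ, f (γ (k + 1)) = γ k

/-- The orbital alpha-limit set `α_o(γ) = ⋂_{n ≥ 0} cl {γ m : m ≥ n}`. -/
def OrbAlpha {Y : Type*} [TopologicalSpace Y] (γ : ℕ → Y) : Set Y :=
  ⋂ n : ℕ, closure (γ '' {m : ℕ | n ≤ m})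

/-- The dual repeller of an attractor `A`: `A* = {x : ω(x) ∩ A = ∅}`. -/
def DualRepeller {Y : Type*} [TopologicalSpace Y] (f : Y → Y) (A : Set Y) : Set Y :=
  {x : Y | OmegaLim f {x} ∩ A = ∅}

/-- The dual attractor of a repeller `R`:
`R* = {x : ∃ backward orbit γ through x with α_o(γ) ∩ R = ∅}`. -/
def DualAttractor {Y : Type*} [TopologicalSpace Y] (f : Y → Y) (R : Set Y) : Set Y :=
  {x : Y | ∃ γ : ℕ → Y, γ 0 = x ∧ IsBackwardOrbit f γ ∧ OrbAlpha γ ∩ R = ∅}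

/-!
Every `R ∈ ℛ` is the union of the join-prime members of `ℛ` below it, since `ℛ` is finite and
closed under `∩`. For each join-prime `J` choose a repelling region `N J` with `Inv⁺(N J) = J`, one
at a time along a linear extension of `⊆`. A repelling region can be shrunk into any neighbourhood
of its repeller (compactness), so `N J` can be taken so close to `J` that `N J ∩ N J'` lies in the
union of the `N S` with `S ⊆ J ∩ J'`. Then `k R := ⋃_{J ⊆ R} N J` preserves `∪` because the `J` are
join-prime, and `∩` by that overlap condition. It is a finite union of repelling regions, and `Inv⁺`
commutes with such unions: for a backward invariant set, the times an orbit spends in it form an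
initial segment of `ℕ`.
-/

open Filter

section Dynamics

variable {Y : Type*} {f : Y → Y} {U W : Set Y} {x : Y}

theorem mem_maxInvPlus_iff : x ∈ MaxInvPlus f U ↔ ∀ n, f^[n] x ∈ U := by
  constructor
  · rintro ⟨S, ⟨hSU, hfS⟩, hxS⟩ n
    exact hSU ((mapsTo_iff_image_subset.2 hfS).iterate n hxS)
  · intro hx
    refine ⟨{y | ∀ n, f^[n] y ∈ U}, ⟨fun y hy => hy 0, ?_⟩, hx⟩
    rintro _ ⟨y, hy, rfl⟩ n
    rw [← Function.iterate_succ_apply]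
    exact hy (n + 1)

theorem maxInvPlus_subset : MaxInvPlus f U ⊆ U :=
  fun _ hx => mem_maxInvPlus_iff.1 hx 0

theorem preimage_iterate_subset (hU : f ⁻¹' U ⊆ U) (n : ℕ) : f^[n] ⁻¹' U ⊆ U := by
  induction n with
  | zero => exact subset_rfl
  | succ n ih =>
    rw [Function.iterate_succ, preimage_comp]
    exact (preimage_mono ih).trans hU

theorem iterate_mem_of_le (hU : f ⁻¹' U ⊆ U) {m n : ℕ} (hmn : m ≤ n) (hx : f^[n] x ∈ U) :
    f^[m] x ∈ U := by
  obtain ⟨k, rfl⟩ := Nat.exists_eq_add_of_le hmn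
  rw [add_comm, Function.iterate_add_apply] at hx
  exact preimage_iterate_subset hU k hx

theorem maxInvPlus_biUnion {ι : Type*} {s : Set ι} (hs : s.Finite) {N : ι → Set Y}
    (hN : ∀ i ∈ s, f ⁻¹' N i ⊆ N i) :
    MaxInvPlus f (⋃ i ∈ s, N i) = ⋃ i ∈ s, MaxInvPlus f (N i) := by
  refine Subset.antisymm (fun x hx => ?_) (iUnion₂_subset fun i hi x hx => ?_)
  · by_contra hnot
    simp only [mem_iUnion₂, mem_maxInvPlus_iff, not_exists, not_forall] at hnot
    choose! n hn using hnot
    obtain ⟨M, hM⟩ := (hs.image n).bddAbove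
    obtain ⟨i, hi, hxi⟩ := mem_iUnion₂.1 (mem_maxInvPlus_iff.1 hx M)
    exact hn i hi (iterate_mem_of_le (hN i hi) (hM (mem_image_of_mem n hi)) hxi)
  · exact mem_maxInvPlus_iff.2 fun n => mem_biUnion hi (mem_maxInvPlus_iff.1 hx n)

theorem maxInvPlus_preimage_iterate (hU : f ⁻¹' U ⊆ U) (m : ℕ) :
    MaxInvPlus f (f^[m] ⁻¹' U) = MaxInvPlus f U := by
  ext x
  simp only [mem_maxInvPlus_iff, mem_preimage, ← Function.iterate_add_apply]
  exact ⟨fun h n => iterate_mem_of_le hU (Nat.le_add_left n m) (h n), fun h n => h (m + n)⟩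

variable [TopologicalSpace Y]

theorem IsRepellingRegion.of_eventually (hU : f ⁻¹' U ⊆ U)
    (h : ∀ᶠ n in atTop, f^[n] ⁻¹' closure U ⊆ interior U) : IsRepellingRegion f U :=
  let ⟨n, hn, hn1⟩ := (h.and (eventually_ge_atTop 1)).exists
  ⟨hU, n, hn1, hn⟩

theorem IsRepellingRegion.eventually (hf : Continuous f) (hU : IsRepellingRegion f U) :
    ∀ᶠ n in atTop, f^[n] ⁻¹' closure U ⊆ interior U := by
  obtain ⟨hback, n₀, -, hn₀⟩ := hU
  filter_upwards [eventually_ge_atTop n₀] with n hn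
  obtain ⟨k, rfl⟩ := Nat.exists_eq_add_of_le hn
  rw [Function.iterate_add, preimage_comp]
  calc f^[k] ⁻¹' (f^[n₀] ⁻¹' closure U) ⊆ f^[k] ⁻¹' interior U := preimage_mono hn₀
    _ ⊆ interior (f^[k] ⁻¹' U) := preimage_interior_subset_interior_preimage (hf.iterate k)
    _ ⊆ interior U := interior_mono (preimage_iterate_subset hback k)

theorem IsRepellingRegion.biUnion (hf : Continuous f) {ι : Type*} {s : Set ι} (hs : s.Finite)
    {N : ι → Set Y} (hN : ∀ i ∈ s, IsRepellingRegion f (N i)) :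
    IsRepellingRegion f (⋃ i ∈ s, N i) := by
  refine .of_eventually ?_ ?_
  · rw [preimage_iUnion₂]
    exact iUnion₂_mono fun i hi => (hN i hi).1
  · filter_upwards [hs.eventually_all.2 fun i hi => (hN i hi).eventually hf] with n hn
    rw [hs.closure_biUnion, preimage_iUnion₂]
    exact iUnion₂_subset fun i hi =>
      (hn i hi).trans (interior_mono (subset_biUnion_of_mem (u := N) hi))

theorem IsRepellingRegion.isRepellingNbhd (hf : Continuous f) (hU : IsRepellingRegion f U) :
    IsRepellingNbhd f U := by
  obtain ⟨hback, n₀, -, hn₀⟩ := hU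
  intro x hx
  have hlate : ⋃ m ≥ n₀, f^[m] ⁻¹' U ⊆ f^[n₀] ⁻¹' closure U :=
    iUnion₂_subset fun m hm y hy => subset_closure (iterate_mem_of_le hback hm hy)
  exact hn₀ (closure_minimal hlate (isClosed_closure.preimage (hf.iterate n₀))
    (mem_iInter.1 hx n₀))

theorem IsRepellingRegion.maxInvPlus_subset_interior (hU : IsRepellingRegion f U) :
    MaxInvPlus f U ⊆ interior U := by
  obtain ⟨-, n₀, -, hn₀⟩ := hU
  exact fun x hx => hn₀ (subset_closure (mem_maxInvPlus_iff.1 hx n₀))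

theorem IsRepellingRegion.iInter_preimage_closure_subset (hU : IsRepellingRegion f U) :
    ⋂ n, f^[n] ⁻¹' closure U ⊆ MaxInvPlus f U := by
  obtain ⟨-, n₀, -, hn₀⟩ := hU
  refine fun x hx => mem_maxInvPlus_iff.2 fun n => interior_subset (hn₀ ?_)
  rw [mem_preimage, ← Function.iterate_add_apply]
  exact mem_iInter.1 hx _

theorem IsRepellingRegion.isClosed_maxInvPlus (hf : Continuous f) (hU : IsRepellingRegion f U) :
    IsClosed (MaxInvPlus f U) := by
  have h : MaxInvPlus f U = ⋂ n, f^[n] ⁻¹' closure U :=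
    Subset.antisymm (fun x hx => mem_iInter.2 fun n => subset_closure (mem_maxInvPlus_iff.1 hx n))
      hU.iInter_preimage_closure_subset
  rw [h]
  exact isClosed_iInter fun n => isClosed_closure.preimage (hf.iterate n)

theorem IsRepeller.isClosed (hf : Continuous f) {R : Set Y} (hR : IsRepeller f R) :
    IsClosed R := by
  obtain ⟨U, hU, rfl⟩ := hR
  exact hU.isClosed_maxInvPlus hf

theorem IsRepellingRegion.preimage_iterate (hf : Continuous f) (hU : IsRepellingRegion f U)
    (m : ℕ) : IsRepellingRegion f (f^[m] ⁻¹' U) := by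
  refine .of_eventually ?_ ?_
  · rw [← preimage_comp, ← Function.iterate_succ, Function.iterate_succ', preimage_comp]
    exact preimage_mono hU.1
  · filter_upwards [hU.eventually hf] with n hn
    calc f^[n] ⁻¹' closure (f^[m] ⁻¹' U) ⊆ f^[n] ⁻¹' (f^[m] ⁻¹' closure U) :=
          preimage_mono ((hf.iterate m).closure_preimage_subset U)
      _ = f^[m] ⁻¹' (f^[n] ⁻¹' closure U) := by
          rw [← preimage_comp, ← preimage_comp, ← Function.iterate_add, ← Function.iterate_add,
            add_comm]
      _ ⊆ f^[m] ⁻¹' interior U := preimage_mono hn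
      _ ⊆ interior (f^[m] ⁻¹' U) := preimage_interior_subset_interior_preimage (hf.iterate m)

theorem IsRepellingRegion.exists_closure_subset [CompactSpace Y] (hf : Continuous f)
    (hU : IsRepellingRegion f U) (hW : IsOpen W) (hUW : MaxInvPlus f U ⊆ W) :
    ∃ V, IsRepellingRegion f V ∧ MaxInvPlus f V = MaxInvPlus f U ∧ closure V ⊆ W := by
  have hanti : Antitone fun m => closure (f^[m] ⁻¹' U) :=
    fun m n hmn => closure_mono fun x hx => iterate_mem_of_le hU.1 hmn hx
  obtain ⟨m, hm⟩ := exists_subset_nhds_of_isCompact' hanti.directed_ge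
    (fun m => isClosed_closure.isCompact) (fun m => isClosed_closure) fun x hx =>
      hW.mem_nhds (hUW (hU.iInter_preimage_closure_subset
        (iInter_mono (fun m => (hf.iterate m).closure_preimage_subset U) hx)))
  exact ⟨f^[m] ⁻¹' U, hU.preimage_iterate hf m, maxInvPlus_preimage_iterate hU.1 m, hm⟩

theorem IsRepeller.exists_isRepellingRegion_closure_subset [CompactSpace Y] (hf : Continuous f)
    {R : Set Y} (hR : IsRepeller f R) (hW : IsOpen W) (hRW : R ⊆ W) :
    ∃ V, IsRepellingRegion f V ∧ MaxInvPlus f V = R ∧ closure V ⊆ W := by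
  obtain ⟨U, hU, rfl⟩ := hR
  exact hU.exists_closure_subset hf hW hRW

end Dynamics

section JoinPrime

variable {X : Type*} {ℛ : Set (Set X)}

def IsJoinPrime (ℛ : Set (Set X)) (J : Set X) : Prop :=
  J ∈ ℛ ∧ J.Nonempty ∧ ∀ A ∈ ℛ, ∀ B ∈ ℛ, J ⊆ A ∪ B → J ⊆ A ∨ J ⊆ B

/-- The smallest member of `ℛ` containing `x` is join-prime. -/
theorem exists_isJoinPrime_mem_subset (hfin : ℛ.Finite)
    (hinf : ∀ R ∈ ℛ, ∀ R' ∈ ℛ, R ∩ R' ∈ ℛ) {R : Set X} (hR : R ∈ ℛ) {x : X} (hx : x ∈ R) :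
    ∃ J, IsJoinPrime ℛ J ∧ x ∈ J ∧ J ⊆ R := by
  obtain ⟨J, ⟨hJℛ, hxJ, hJR⟩, hmin⟩ :=
    (hfin.sep fun S => x ∈ S ∧ S ⊆ R).exists_minimal ⟨R, hR, hx, subset_rfl⟩
  have hbelow : ∀ A ∈ ℛ, x ∈ A → J ⊆ A := fun A hA hxA =>
    (hmin ⟨hinf J hJℛ A hA, ⟨hxJ, hxA⟩, inter_subset_left.trans hJR⟩ inter_subset_left).trans
      inter_subset_right
  refine ⟨J, ⟨hJℛ, ⟨x, hxJ⟩, fun A hA B hB hAB => ?_⟩, hxJ, hJR⟩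
  exact (hAB hxJ).imp (hbelow A hA) (hbelow B hB)

theorem biUnion_isJoinPrime_eq (hfin : ℛ.Finite) (hinf : ∀ R ∈ ℛ, ∀ R' ∈ ℛ, R ∩ R' ∈ ℛ)
    {R : Set X} (hR : R ∈ ℛ) : ⋃ J ∈ {J | IsJoinPrime ℛ J ∧ J ⊆ R}, J = R := by
  refine Subset.antisymm (iUnion₂_subset fun J hJ => hJ.2) fun x hx => ?_
  obtain ⟨J, hJ, hxJ, hJR⟩ := exists_isJoinPrime_mem_subset hfin hinf hR hx
  exact mem_biUnion ⟨hJ, hJR⟩ hxJ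

end JoinPrime

section CompatibleFamily

variable {X : Type*} [TopologicalSpace X] {f : X → X} {ℛ T : Set (Set X)}
  {N : Set X → Set X} {J₀ : Set X}

def interiorBelow (T : Set (Set X)) (N : Set X → Set X) (S : Set X) : Set X :=
  ⋃ J ∈ {J ∈ T | J ⊆ S}, interior (N J)

/-- The last condition quantifies over all of `ℛ`, so that members added later can be kept close
enough to their repellers for `inter_subset` to persist. -/
structure IsCompatibleFamily (f : X → X) (ℛ T : Set (Set X)) (N : Set X → Set X) : Prop where
  isRepellingRegion : ∀ J ∈ T, IsRepellingRegion f (N J)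
  maxInvPlus_eq : ∀ J ∈ T, MaxInvPlus f (N J) = J
  inter_subset : ∀ J ∈ T, ∀ J' ∈ T, ¬J ⊆ J' → ¬J' ⊆ J →
    N J ∩ N J' ⊆ interiorBelow T N (J ∩ J')
  inter_closure_subset : ∀ R ∈ ℛ, ∀ J ∈ T, ¬J ⊆ R →
    R ∩ closure (N J) ⊆ interiorBelow T N (R ∩ J)

theorem isOpen_interiorBelow (S : Set X) : IsOpen (interiorBelow T N S) :=
  isOpen_biUnion fun _ _ => isOpen_interior

theorem interiorBelow_mono {T' : Set (Set X)} {N' : Set X → Set X} (hTT' : T ⊆ T')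
    (hNN' : ∀ J ∈ T, N' J = N J) (S : Set X) : interiorBelow T N S ⊆ interiorBelow T' N' S :=
  iUnion₂_subset fun J hJ => by
    rw [← hNN' J hJ.1]
    exact subset_biUnion_of_mem (u := fun J => interior (N' J)) ⟨hTT' hJ.1, hJ.2⟩

theorem IsCompatibleFamily.empty : IsCompatibleFamily f ℛ ∅ N :=
  ⟨by simp, by simp, by simp, by simp⟩

theorem IsCompatibleFamily.subset_interiorBelow (hN : IsCompatibleFamily f ℛ T N) {S : Set X}
    (hS : ∀ x ∈ S, ∃ J ∈ T, x ∈ J ∧ J ⊆ S) : S ⊆ interiorBelow T N S := fun x hx => by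
  obtain ⟨J, hJ, hxJ, hJS⟩ := hS x hx
  refine mem_biUnion ⟨hJ, hJS⟩ ((hN.isRepellingRegion J hJ).maxInvPlus_subset_interior ?_)
  rwa [hN.maxInvPlus_eq J hJ]

theorem IsCompatibleFamily.extend (hN : IsCompatibleFamily f ℛ T N) {N' : Set X → Set X}
    (hN'T : ∀ J ∈ T, N' J = N J) (hreg : IsRepellingRegion f (N' J₀))
    (hmax : MaxInvPlus f (N' J₀) = J₀)
    (hnear : ∀ R ∈ ℛ, ¬J₀ ⊆ R → R ∩ closure (N' J₀) ⊆ interiorBelow T N (R ∩ J₀))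
    (hoverlap : ∀ J ∈ T, ¬J₀ ⊆ J → ¬J ⊆ J₀ → N' J₀ ∩ N J ⊆ interiorBelow T N (J₀ ∩ J)) :
    IsCompatibleFamily f ℛ (insert J₀ T) N' := by
  have hG := interiorBelow_mono (subset_insert J₀ T) hN'T
  refine ⟨fun J hJ => ?_, fun J hJ => ?_, fun J hJ J' hJ' h h' => ?_, fun R hR J hJ h => ?_⟩
  · obtain rfl | hJT := mem_insert_iff.1 hJ
    · exact hreg
    · exact hN'T J hJT ▸ hN.isRepellingRegion J hJT
  · obtain rfl | hJT := mem_insert_iff.1 hJ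
    · exact hmax
    · exact hN'T J hJT ▸ hN.maxInvPlus_eq J hJT
  · obtain rfl | hJT := mem_insert_iff.1 hJ <;> obtain rfl | hJ'T := mem_insert_iff.1 hJ'
    · exact absurd subset_rfl h
    · rw [hN'T J' hJ'T]
      exact (hoverlap J' hJ'T h h').trans (hG _)
    · rw [hN'T J hJT, inter_comm, inter_comm J]
      exact (hoverlap J hJT h' h).trans (hG _)
    · rw [hN'T J hJT, hN'T J' hJ'T]
      exact (hN.inter_subset J hJT J' hJ'T h h').trans (hG _)
  · obtain rfl | hJT := mem_insert_iff.1 hJ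
    · exact (hnear R hR h).trans (hG _)
    · rw [hN'T J hJT]
      exact (hN.inter_closure_subset R hR J hJT h).trans (hG _)

/-- The region for the new member `J₀` is taken inside an open neighbourhood of `J₀` that avoids
the finitely many closed sets on which the conditions of `IsCompatibleFamily` could fail. -/
theorem IsCompatibleFamily.exists_extend [CompactSpace X] (hf : Continuous f)
    (hN : IsCompatibleFamily f ℛ T N) (hfin : ℛ.Finite) (hT : T.Finite)
    (hclosed : ∀ R ∈ ℛ, IsClosed R) (hinf : ∀ R ∈ ℛ, ∀ R' ∈ ℛ, R ∩ R' ∈ ℛ)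
    (hJ₀ : IsRepeller f J₀) (hJ₀ℛ : J₀ ∈ ℛ) (hJ₀T : J₀ ∉ T)
    (hbelow : ∀ S ∈ ℛ, S ⊂ J₀ → ∀ x ∈ S, ∃ J ∈ T, x ∈ J ∧ J ⊆ S) :
    ∃ N', IsCompatibleFamily f ℛ (insert J₀ T) N' := by
  classical
  set W := (⋂ R ∈ {R ∈ ℛ | ¬J₀ ⊆ R}, Rᶜ ∪ interiorBelow T N (R ∩ J₀)) ∩
    ⋂ J ∈ {J ∈ T | ¬J₀ ⊆ J ∧ ¬J ⊆ J₀}, (closure (N J))ᶜ ∪ interiorBelow T N (J₀ ∩ J)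
  have hWopen : IsOpen W :=
    ((hfin.sep _).isOpen_biInter fun R hR =>
        (hclosed R hR.1).isOpen_compl.union (isOpen_interiorBelow _)).inter
      ((hT.sep _).isOpen_biInter fun _ _ =>
        isClosed_closure.isOpen_compl.union (isOpen_interiorBelow _))
  have hJ₀W : J₀ ⊆ W := by
    refine subset_inter (subset_iInter₂ fun R hR => ?_) (subset_iInter₂ fun J hJ => ?_)
    · rw [← Set.inter_subset, inter_comm]
      exact hN.subset_interiorBelow (hbelow _ (hinf R hR.1 J₀ hJ₀ℛ)
        ⟨inter_subset_right, fun h => hR.2 (h.trans inter_subset_left)⟩)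
    · rw [← Set.inter_subset]
      exact hN.inter_closure_subset J₀ hJ₀ℛ J hJ.1 hJ.2.2
  obtain ⟨V, hV, hVmax, hVW⟩ := hJ₀.exists_isRepellingRegion_closure_subset hf hWopen hJ₀W
  refine ⟨Function.update N J₀ V, hN.extend
    (fun J hJ => Function.update_of_ne (ne_of_mem_of_not_mem hJ hJ₀T) _ _)
    (by rwa [Function.update_self]) (by rwa [Function.update_self]) (fun R hR h x hx => ?_)
    (fun J hJ h h' x hx => ?_)⟩
  · rw [Function.update_self] at hx
    exact (mem_iInter₂.1 (hVW hx.2).1 R ⟨hR, h⟩).resolve_left (not_not_intro hx.1)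
  · rw [Function.update_self] at hx
    exact (mem_iInter₂.1 (hVW (subset_closure hx.1)).2 J ⟨hJ, h, h'⟩).resolve_left
      (not_not_intro (subset_closure hx.2))

/-- Join-primes are added in an order extending `⊆`: a minimal one among those not yet added. -/
theorem exists_isCompatibleFamily [CompactSpace X] (hf : Continuous f) (hfin : ℛ.Finite)
    (hrep : ∀ R ∈ ℛ, IsRepeller f R) (hinf : ∀ R ∈ ℛ, ∀ R' ∈ ℛ, R ∩ R' ∈ ℛ) :
    ∃ N, IsCompatibleFamily f ℛ {J | IsJoinPrime ℛ J} N := by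
  have hprime : {J | IsJoinPrime ℛ J}.Finite := hfin.subset fun J hJ => hJ.1
  refine hprime.induction_to (C := fun T => ∃ N, IsCompatibleFamily f ℛ T N) ∅
    (empty_subset _) ⟨fun _ => ∅, .empty⟩ fun T hT ⟨N, hN⟩ => ?_
  obtain ⟨J₀, ⟨hJ₀, hJ₀T⟩, hmin⟩ := hprime.sdiff.exists_minimal (nonempty_of_ssubset hT)
  refine ⟨J₀, ⟨hJ₀, hJ₀T⟩, hN.exists_extend hf hfin (hprime.subset hT.subset)
    (fun R hR => (hrep R hR).isClosed hf) hinf (hrep J₀ hJ₀.1) hJ₀.1 hJ₀T ?_⟩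
  intro S hS hSJ₀ x hx
  obtain ⟨J, hJ, hxJ, hJS⟩ := exists_isJoinPrime_mem_subset hfin hinf hS hx
  refine ⟨J, ?_, hxJ, hJS⟩
  by_contra hJT
  exact hSJ₀.2 ((hmin ⟨hJ, hJT⟩ (hJS.trans hSJ₀.1)).trans hJS)

end CompatibleFamily

section Lift

variable {X : Type*} {ℛ : Set (Set X)} {N : Set X → Set X}

def joinPrimeLift (ℛ : Set (Set X)) (N : Set X → Set X) (R : Set X) : Set X :=
  ⋃ J ∈ {J | IsJoinPrime ℛ J ∧ J ⊆ R}, N J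

theorem joinPrimeLift_empty : joinPrimeLift ℛ N ∅ = ∅ :=
  eq_empty_of_subset_empty <| iUnion₂_subset fun _ hJ =>
    absurd (subset_empty_iff.1 hJ.2) hJ.1.2.1.ne_empty

theorem joinPrimeLift_union {R R' : Set X} (hR : R ∈ ℛ) (hR' : R' ∈ ℛ) :
    joinPrimeLift ℛ N (R ∪ R') = joinPrimeLift ℛ N R ∪ joinPrimeLift ℛ N R' := by
  have hsplit : {J | IsJoinPrime ℛ J ∧ J ⊆ R ∪ R'} =
      {J | IsJoinPrime ℛ J ∧ J ⊆ R} ∪ {J | IsJoinPrime ℛ J ∧ J ⊆ R'} := by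
    ext J
    constructor
    · rintro ⟨hJ, hJRR'⟩
      exact (hJ.2.2 R hR R' hR' hJRR').imp (⟨hJ, ·⟩) (⟨hJ, ·⟩)
    · rintro (⟨hJ, h⟩ | ⟨hJ, h⟩)
      exacts [⟨hJ, h.trans subset_union_left⟩, ⟨hJ, h.trans subset_union_right⟩]
  rw [joinPrimeLift, hsplit, biUnion_union]
  rfl

variable [TopologicalSpace X] {f : X → X}

theorem IsCompatibleFamily.joinPrimeLift_inter
    (hN : IsCompatibleFamily f ℛ {J | IsJoinPrime ℛ J} N) (R R' : Set X) :
    joinPrimeLift ℛ N (R ∩ R') = joinPrimeLift ℛ N R ∩ joinPrimeLift ℛ N R' := by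
  refine Subset.antisymm (subset_inter
    (biUnion_mono (fun J hJ => ⟨hJ.1, hJ.2.trans inter_subset_left⟩) fun _ _ => le_rfl)
    (biUnion_mono (fun J hJ => ⟨hJ.1, hJ.2.trans inter_subset_right⟩) fun _ _ => le_rfl)) ?_
  rintro x ⟨hx, hx'⟩
  obtain ⟨J, ⟨hJ, hJR⟩, hxJ⟩ := mem_iUnion₂.1 hx
  obtain ⟨J', ⟨hJ', hJ'R'⟩, hxJ'⟩ := mem_iUnion₂.1 hx'
  by_cases h : J ⊆ J'
  · exact mem_biUnion ⟨hJ, subset_inter hJR (h.trans hJ'R')⟩ hxJ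
  by_cases h' : J' ⊆ J
  · exact mem_biUnion ⟨hJ', subset_inter (h'.trans hJR) hJ'R'⟩ hxJ'
  obtain ⟨S, ⟨hS, hSJJ'⟩, hxS⟩ := mem_iUnion₂.1 (hN.inter_subset J hJ J' hJ' h h' ⟨hxJ, hxJ'⟩)
  exact mem_biUnion ⟨hS, hSJJ'.trans (inter_subset_inter hJR hJ'R')⟩ (interior_subset hxS)

theorem IsCompatibleFamily.isRepellingRegion_joinPrimeLift (hf : Continuous f)
    (hfin : ℛ.Finite) (hN : IsCompatibleFamily f ℛ {J | IsJoinPrime ℛ J} N) (R : Set X) :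
    IsRepellingRegion f (joinPrimeLift ℛ N R) :=
  .biUnion hf (hfin.subset fun _ hJ => hJ.1.1) fun J hJ => hN.isRepellingRegion J hJ.1

theorem IsCompatibleFamily.maxInvPlus_joinPrimeLift (hfin : ℛ.Finite)
    (hinf : ∀ R ∈ ℛ, ∀ R' ∈ ℛ, R ∩ R' ∈ ℛ) (hN : IsCompatibleFamily f ℛ {J | IsJoinPrime ℛ J} N)
    {R : Set X} (hR : R ∈ ℛ) : MaxInvPlus f (joinPrimeLift ℛ N R) = R := by
  rw [joinPrimeLift, maxInvPlus_biUnion (hfin.subset fun _ hJ => hJ.1.1)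
    fun J hJ => (hN.isRepellingRegion J hJ.1).1]
  conv_rhs => rw [← biUnion_isJoinPrime_eq hfin hinf hR]
  exact iUnion₂_congr fun J hJ => hN.maxInvPlus_eq J hJ.1

end Lift

theorem finite_repeller_lattice_lifts_general
    {X : Type*} [MetricSpace X] [CompactSpace X]
    (f : X → X) (hf : Continuous f)
    (ℛ : Set (Set X)) (hfin : ℛ.Finite)
    (hrep : ∀ R ∈ ℛ, IsRepeller f R)
    (htop : (Set.univ : Set X) ∈ ℛ)
    (hinf : ∀ R ∈ ℛ, ∀ R' ∈ ℛ, R ∩ R' ∈ ℛ) :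
    ∃ k : Set X → Set X,
      (∀ R ∈ ℛ, IsRepellingNbhd f (k R) ∧ MaxInvPlus f (k R) = R) ∧
      k ∅ = ∅ ∧ k Set.univ = Set.univ ∧
      (∀ R ∈ ℛ, ∀ R' ∈ ℛ, k (R ∪ R') = k R ∪ k R') ∧
      (∀ R ∈ ℛ, ∀ R' ∈ ℛ, k (R ∩ R') = k R ∩ k R') ∧
      (∀ R ∈ ℛ, ∀ R' ∈ ℛ, k R = k R' → R = R') := by
  obtain ⟨N, hN⟩ := exists_isCompatibleFamily hf hfin hrep hinf
  have hmax : ∀ R ∈ ℛ, MaxInvPlus f (joinPrimeLift ℛ N R) = R :=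
    fun R hR => hN.maxInvPlus_joinPrimeLift hfin hinf hR
  refine ⟨joinPrimeLift ℛ N,
    fun R hR => ⟨(hN.isRepellingRegion_joinPrimeLift hf hfin R).isRepellingNbhd hf, hmax R hR⟩,
    joinPrimeLift_empty, ?_, fun R hR R' hR' => joinPrimeLift_union hR hR',
    fun R _ R' _ => hN.joinPrimeLift_inter R R', fun R hR R' hR' h => ?_⟩
  · exact eq_univ_of_univ_subset ((hmax univ htop).symm.subset.trans maxInvPlus_subset)
  · rw [← hmax R hR, ← hmax R' hR', h]

/-- A finite sublattice of repellers lifts to a lattice of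
repelling neighborhoods. -/
theorem finite_repeller_lattice_lifts
    {X : Type*} [MetricSpace X] [CompactSpace X]
    (f : X → X) (hf : Continuous f)
    (ℛ : Set (Set X)) (hfin : ℛ.Finite)
    (hrep : ∀ R ∈ ℛ, IsRepeller f R)
    (hbot : (∅ : Set X) ∈ ℛ) (htop : (Set.univ : Set X) ∈ ℛ)
    (hsup : ∀ R ∈ ℛ, ∀ R' ∈ ℛ, R ∪ R' ∈ ℛ)
    (hinf : ∀ R ∈ ℛ, ∀ R' ∈ ℛ, R ∩ R' ∈ ℛ) :
    ∃ k : Set X → Set X,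
      (∀ R ∈ ℛ, IsRepellingNbhd f (k R) ∧ MaxInvPlus f (k R) = R) ∧
      k ∅ = ∅ ∧ k Set.univ = Set.univ ∧
      (∀ R ∈ ℛ, ∀ R' ∈ ℛ, k (R ∪ R') = k R ∪ k R') ∧
      (∀ R ∈ ℛ, ∀ R' ∈ ℛ, k (R ∩ R') = k R ∩ k R') ∧
      (∀ R ∈ ℛ, ∀ R' ∈ ℛ, k R = k R' → R = R') :=
  finite_repeller_lattice_lifts_general f hf ℛ hfin hrep htop hinf
end

section
/- Let X be a compact metric space and f : X → X a continuous map, and let A, R ⊆ X. The following are equivalent: (i) A is an attractor of f and R = A* = {x ∈ X : ω(x) ∩ A = ∅} is its dual repeller; (ii) A and R are disjoint compact sets, A is invariant, R is forward invariant, and for every x ∈ X \ (A ∪ R) one has ω(x) ⊆ A and every backward orbit γ through x satisfies α_o(γ) ⊆ R. -/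
open Set

/-! If `U` is a trapping region with `f^[n] '' closure U ⊆ interior U`, then `Inv(U)` is the nested
intersection `⋂ k, f^[k] '' closure U`, and `A*` is the set of points whose orbit never enters
`interior U`: this makes `A*` closed and forward invariant, and an α-limit point of a backward
orbit whose forward orbit meets `interior U` forces the backward orbit to visit `closure U`
infinitely often, i.e. its base point into every `f^[k] '' closure U`.

Conversely, pick an open `V ⊇ A` with `closure V ∩ R = ∅`. A backward orbit staying in `closure V`
must start in `A`, since its nonempty α-limit set misses `R`. By compactness of `ℕ → X` this
gives a uniform time after which orbit segments in `closure V` lie in any given neighbourhood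
of `A`; hence the points whose whole forward orbit lies in `V` form a trapping region, whose
maximal invariant subset is `A`. -/

open Set Filter Topology

theorem IsBackwardOrbit.iterate_apply {X : Type*} {f : X → X} {γ : ℕ → X}
    (hγ : IsBackwardOrbit f γ) (m i : ℕ) : f^[i] (γ (m + i)) = γ m := by
  induction i with
  | zero => rfl
  | succ i ih => rw [← add_assoc, Function.iterate_succ_apply, hγ, ih]

theorem exists_isBackwardOrbit_of_surjOn {X : Type*} {f : X → X} {S : Set X} (hS : SurjOn f S S)
    {x : X} (hx : x ∈ S) : ∃ γ : ℕ → X, γ 0 = x ∧ IsBackwardOrbit f γ ∧ ∀ k, γ k ∈ S := by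
  have hpre : ∀ y ∈ S, ∃ z ∈ S, f z = y := fun y hy => hS hy
  choose! g hgS hg using hpre
  refine ⟨fun k => g^[k] x, rfl, fun k => ?_, fun k => MapsTo.iterate hgS k hx⟩
  simp only [Function.iterate_succ_apply']
  exact hg _ (MapsTo.iterate hgS k hx)

section Limits

variable {X : Type*} [TopologicalSpace X] {f : X → X}

theorem mem_orbAlpha_iff {γ : ℕ → X} {z : X} : z ∈ OrbAlpha γ ↔ MapClusterPt z atTop γ := by
  rw [mapClusterPt_atTop_iff_forall_mem_closure]
  exact mem_iInter

theorem mem_omegaLim_singleton_iff {x y : X} :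
    y ∈ OmegaLim f {x} ↔ MapClusterPt y atTop (fun m => f^[m] x) := by
  simp [mapClusterPt_atTop_iff_forall_mem_closure, OmegaLim, image_eq_iUnion]

theorem omegaLim_singleton_subset {x : X} {C : Set X} (hC : IsClosed C)
    (h : ∀ᶠ m in atTop, f^[m] x ∈ C) : OmegaLim f {x} ⊆ C :=
  fun _ hy => hC.mem_of_mapClusterPt (mem_omegaLim_singleton_iff.1 hy) h

theorem orbAlpha_subset {γ : ℕ → X} {C : Set X} (hC : IsClosed C)
    (h : ∀ᶠ m in atTop, γ m ∈ C) : OrbAlpha γ ⊆ C :=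
  fun _ hz => hC.mem_of_mapClusterPt (mem_orbAlpha_iff.1 hz) h

theorem omegaLim_singleton_nonempty [CompactSpace X] (f : X → X) (x : X) :
    (OmegaLim f {x}).Nonempty :=
  let ⟨y, _, hy⟩ :=
    isCompact_univ.exists_mapClusterPt (f := atTop) (u := fun m => f^[m] x) (by simp)
  ⟨y, mem_omegaLim_singleton_iff.2 hy⟩

theorem orbAlpha_nonempty [CompactSpace X] (γ : ℕ → X) : (OrbAlpha γ).Nonempty :=
  let ⟨z, _, hz⟩ := isCompact_univ.exists_mapClusterPt (f := atTop) (u := γ) (by simp)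
  ⟨z, mem_orbAlpha_iff.2 hz⟩

theorem IsBackwardOrbit.mapsTo_orbAlpha {γ : ℕ → X} (hf : Continuous f)
    (hγ : IsBackwardOrbit f γ) : MapsTo f (OrbAlpha γ) (OrbAlpha γ) := by
  intro z hz
  have hshift : MapClusterPt z atTop (γ ∘ (· + 1)) := by
    rw [mapClusterPt_comp, map_add_atTop_eq_nat]
    exact mem_orbAlpha_iff.1 hz
  have hfγ : f ∘ γ ∘ (· + 1) = γ := funext hγ
  rw [mem_orbAlpha_iff, ← hfγ]
  exact hshift.continuousAt_comp hf.continuousAt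

end Limits

theorem Set.MapsTo.antitone_iterate_image {X : Type*} {f : X → X} {K : Set X}
    (h : MapsTo f K K) : Antitone fun k => f^[k] '' K :=
  antitone_nat_of_succ_le fun k => by
    rw [Function.iterate_succ, image_comp]
    exact image_mono h.image_subset

theorem IsBackwardOrbit.mem_iInter_iterate_image {X : Type*} {f : X → X} {K : Set X}
    (hK : MapsTo f K K) {γ : ℕ → X} (hγ : IsBackwardOrbit f γ) (h : ∃ᶠ m in atTop, γ m ∈ K) :
    γ 0 ∈ ⋂ k, f^[k] '' K := by
  refine mem_iInter.2 fun k => ?_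
  obtain ⟨m, hm, hkm⟩ := (h.and_eventually (eventually_ge_atTop k)).exists
  have hγm : f^[m] (γ m) = γ 0 := by simpa using hγ.iterate_apply 0 m
  exact hK.antitone_iterate_image hkm (hγm ▸ mem_image_of_mem _ hm)

section CompactInvariant

variable {X : Type*} [TopologicalSpace X] [CompactSpace X] [T2Space X] {f : X → X} {K : Set X}

theorem isClosed_iterate_image (hf : Continuous f) (hK : IsClosed K) (k : ℕ) :
    IsClosed (f^[k] '' K) :=
  (hK.isCompact.image (hf.iterate k)).isClosed

theorem image_iInter_iterate_image (hf : Continuous f) (hK : IsClosed K) (hfK : MapsTo f K K) :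
    f '' ⋂ k, f^[k] '' K = ⋂ k, f^[k] '' K := by
  have hsucc : ∀ k, f '' (f^[k] '' K) = f^[k + 1] '' K := fun k => by
    rw [Function.iterate_succ', image_comp]
  refine subset_antisymm ?_ fun y hy => ?_
  · rintro _ ⟨z, hz, rfl⟩
    refine mem_iInter.2 fun k => hfK.antitone_iterate_image k.le_succ (?_ : _ ∈ f^[k + 1] '' K)
    rw [← hsucc]
    exact mem_image_of_mem f (mem_iInter.1 hz k)
  -- a preimage of `y` in `⋂ k, f^[k] '' K`, from the nested compact sets `f⁻¹{y} ∩ f^[k] '' K`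
  obtain ⟨z, hz⟩ := IsCompact.nonempty_iInter_of_sequence_nonempty_isCompact_isClosed
    (fun k => f ⁻¹' {y} ∩ f^[k] '' K)
    (fun k => inter_subset_inter_right _ (hfK.antitone_iterate_image k.le_succ))
    (fun k => by
      obtain ⟨z, hz, rfl⟩ := (hsucc k).symm ▸ mem_iInter.1 hy (k + 1)
      exact ⟨z, rfl, hz⟩)
    ((isClosed_singleton.preimage hf).inter (isClosed_iterate_image hf hK 0)).isCompact
    (fun k => (isClosed_singleton.preimage hf).inter (isClosed_iterate_image hf hK k))
  exact ⟨z, mem_iInter.2 fun k => (mem_iInter.1 hz k).2, (mem_iInter.1 hz 0).1⟩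

theorem omegaLim_subset_iInter_iterate_image (hf : Continuous f) (hK : IsClosed K)
    (hfK : MapsTo f K K) {x : X} {t : ℕ} (ht : f^[t] x ∈ K) :
    OmegaLim f {x} ⊆ ⋂ k, f^[k] '' K := by
  refine subset_iInter fun k => omegaLim_singleton_subset (isClosed_iterate_image hf hK k) ?_
  filter_upwards [eventually_ge_atTop (t + k)] with m hm
  obtain ⟨j, rfl⟩ := Nat.exists_eq_add_of_le hm
  rw [show t + k + j = k + (j + t) by ring, Function.iterate_add_apply, Function.iterate_add_apply]
  exact mem_image_of_mem _ (hfK.iterate j ht)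

end CompactInvariant

namespace IsTrappingRegion

variable {X : Type*} [TopologicalSpace X] {f : X → X} {U : Set X}

theorem mapsTo_closure (hf : Continuous f) (hU : IsTrappingRegion f U) :
    MapsTo f (closure U) (closure U) :=
  (mapsTo_iff_image_subset.2 hU.1).closure hf

theorem iInter_iterate_image_subset_interior (hU : IsTrappingRegion f U) :
    ⋂ k, f^[k] '' closure U ⊆ interior U :=
  let ⟨_, n, _, hn⟩ := hU
  (iInter_subset _ n).trans hn

theorem orbAlpha_subset (hf : Continuous f) (hU : IsTrappingRegion f U) {γ : ℕ → X}
    (hγ : IsBackwardOrbit f γ) (hγ0 : γ 0 ∉ ⋂ k, f^[k] '' closure U) :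
    OrbAlpha γ ⊆ ⋂ k, f^[k] ⁻¹' (interior U)ᶜ := by
  refine fun z hz => mem_iInter.2 fun k hk => hγ0 ?_
  -- `f^[k] z` is again an α-limit point, lying in the open set `interior U`
  have hkz := mem_orbAlpha_iff.1 ((hγ.mapsTo_orbAlpha hf).iterate k hz)
  exact hγ.mem_iInter_iterate_image (hU.mapsTo_closure hf)
    (hkz.frequently (isOpen_interior.mem_nhds hk) |>.mono fun _ h => interior_subset_closure h)

variable [CompactSpace X] [T2Space X]

theorem maxInv_eq (hf : Continuous f) (hU : IsTrappingRegion f U) :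
    MaxInv f U = ⋂ k, f^[k] '' closure U := by
  refine subset_antisymm (sUnion_subset fun S ⟨hSU, hS⟩ => subset_iInter fun k => ?_) ?_
  · exact (SurjOn.iterate hS.ge k).trans (image_mono (hSU.trans subset_closure))
  · exact subset_sUnion_of_mem ⟨hU.iInter_iterate_image_subset_interior.trans interior_subset,
      image_iInter_iterate_image hf isClosed_closure (hU.mapsTo_closure hf)⟩

theorem dualRepeller_eq (hf : Continuous f) (hU : IsTrappingRegion f U) :
    DualRepeller f (⋂ k, f^[k] '' closure U) = ⋂ k, f^[k] ⁻¹' (interior U)ᶜ := by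
  ext x
  simp only [DualRepeller, mem_ofPred_eq, mem_iInter, mem_preimage, mem_compl_iff,
    ← not_nonempty_iff_eq_empty]
  constructor
  · intro hx k hk
    obtain ⟨y, hy⟩ := omegaLim_singleton_nonempty f x
    exact hx ⟨y, hy, omegaLim_subset_iInter_iterate_image hf isClosed_closure
      (hU.mapsTo_closure hf) (interior_subset_closure hk) hy⟩
  · rintro hx ⟨y, hy, hyA⟩
    exact omegaLim_singleton_subset isOpen_interior.isClosed_compl (.of_forall hx) hy
      (hU.iInter_iterate_image_subset_interior hyA)

end IsTrappingRegion

section Converse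

variable {X : Type*} [TopologicalSpace X] [CompactSpace X] {f : X → X} {A R : Set X}

theorem IsBackwardOrbit.mem_of_forall_mem
    (hback : ∀ x ∈ (A ∪ R)ᶜ, ∀ γ : ℕ → X, γ 0 = x → IsBackwardOrbit f γ → OrbAlpha γ ⊆ R)
    {γ : ℕ → X} (hγ : IsBackwardOrbit f γ) {C : Set X} (hC : IsClosed C) (hCR : Disjoint C R)
    (hγC : ∀ k, γ k ∈ C) : γ 0 ∈ A := by
  by_contra hγ0
  obtain ⟨z, hz⟩ := orbAlpha_nonempty γ
  have hγ0R : γ 0 ∉ R := disjoint_left.1 hCR (hγC 0)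
  exact disjoint_left.1 hCR (orbAlpha_subset hC (.of_forall hγC) hz)
    (hback _ (by simp [hγ0, hγ0R]) γ rfl hγ hz)

theorem eq_dualRepeller (hA : IsClosed A) (hfA : MapsTo f A A) (hR : IsClosed R)
    (hfR : MapsTo f R R) (hAR : Disjoint A R)
    (hω : ∀ x ∈ (A ∪ R)ᶜ, OmegaLim f {x} ⊆ A) : R = DualRepeller f A := by
  ext x
  simp only [DualRepeller, mem_ofPred_eq, ← not_nonempty_iff_eq_empty]
  constructor
  · rintro hx ⟨y, hy, hyA⟩
    exact disjoint_left.1 hAR hyA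
      (omegaLim_singleton_subset hR (.of_forall fun m => hfR.iterate m hx) hy)
  · intro hx
    by_contra hxR
    obtain ⟨y, hy⟩ := omegaLim_singleton_nonempty f x
    refine hx ⟨y, hy, ?_⟩
    by_cases hxA : x ∈ A
    · exact omegaLim_singleton_subset hA (.of_forall fun m => hfA.iterate m hxA) hy
    · exact hω x (by simp [hxA, hxR]) hy

theorem maxInv_eq_of_disjoint
    (hback : ∀ x ∈ (A ∪ R)ᶜ, ∀ γ : ℕ → X, γ 0 = x → IsBackwardOrbit f γ → OrbAlpha γ ⊆ R)
    (hfA : f '' A = A) {U : Set X} (hAU : A ⊆ U) (hUR : Disjoint (closure U) R) :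
    MaxInv f U = A := by
  refine subset_antisymm (sUnion_subset fun S ⟨hSU, hS⟩ x hx => ?_)
    (subset_sUnion_of_mem ⟨hAU, hfA⟩)
  obtain ⟨γ, rfl, hγ, hγS⟩ := exists_isBackwardOrbit_of_surjOn hS.ge hx
  exact hγ.mem_of_forall_mem hback isClosed_closure hUR fun k => subset_closure (hSU (hγS k))

variable [T2Space X]

theorem exists_iterate_mem_of_forall_mem (hf : Continuous f)
    (hback : ∀ x ∈ (A ∪ R)ᶜ, ∀ γ : ℕ → X, γ 0 = x → IsBackwardOrbit f γ → OrbAlpha γ ⊆ R)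
    {C W : Set X} (hC : IsClosed C) (hCR : Disjoint C R) (hW : IsOpen W) (hAW : A ⊆ W) :
    ∃ N, ∀ x, (∀ k ≤ N, f^[k] x ∈ C) → f^[N] x ∈ W := by
  by_contra! h
  choose x hxC hxW using h
  -- a cluster point of the orbit segments `x N, …, f^[N] (x N)`, read backwards, is a backward
  -- orbit in `C` starting outside `W`
  let σ : ℕ → ℕ → X := fun N i => f^[N - i] (x N)
  obtain ⟨γ, -, hγ⟩ := isCompact_univ.exists_mapClusterPt (f := atTop) (u := σ) (by simp)
  have hlim {P : (ℕ → X) → Prop} (hP : IsClosed {τ | P τ}) (h : ∀ᶠ N in atTop, P (σ N)) : P γ :=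
    hP.mem_of_mapClusterPt hγ h
  have hγC : ∀ i, γ i ∈ C := fun i => hlim (hC.preimage (continuous_apply i))
    (.of_forall fun N => hxC N _ (Nat.sub_le N i))
  have hγorb : IsBackwardOrbit f γ := fun i => by
    refine hlim (isClosed_eq (hf.comp (continuous_apply _)) (continuous_apply _)) ?_
    filter_upwards [eventually_gt_atTop i] with N hN
    change f (f^[N - (i + 1)] (x N)) = f^[N - i] (x N)
    rw [← Function.iterate_succ_apply' f, show (N - (i + 1)).succ = N - i by omega]
  have hγW : γ 0 ∉ W := hlim (hW.isClosed_compl.preimage (continuous_apply 0))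
    (.of_forall fun N => hxW N)
  exact hγW (hAW (hγorb.mem_of_forall_mem hback hC hCR hγC))

theorem exists_forall_iterate_mem (hf : Continuous f)
    (hback : ∀ x ∈ (A ∪ R)ᶜ, ∀ γ : ℕ → X, γ 0 = x → IsBackwardOrbit f γ → OrbAlpha γ ⊆ R)
    (hfA : MapsTo f A A) {V : Set X} (hV : IsOpen V) (hAV : A ⊆ V)
    (hVR : Disjoint (closure V) R) :
    ∃ N, ∀ x, (∀ k ≤ N, f^[k] x ∈ V) → ∀ m, f^[m] x ∈ V := by
  obtain ⟨N, hN⟩ := exists_iterate_mem_of_forall_mem hf hback isClosed_closure hVR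
    (hV.preimage hf) fun a ha => hAV (hfA ha)
  refine ⟨N, fun x hx m => ?_⟩
  suffices ∀ m, ∀ k ≤ N + m, f^[k] x ∈ V from this m m (by omega)
  intro m
  induction m with
  | zero => exact hx
  | succ m ih =>
    intro k hk
    rcases Nat.lt_or_ge k (N + m + 1) with hk' | hk'
    · exact ih k (by omega)
    · obtain rfl : k = N + m + 1 := by omega
      have hstep := hN (f^[m] x) fun j hj => by
        rw [← Function.iterate_add_apply]
        exact subset_closure (ih _ (by omega))
      rwa [show N + m + 1 = 1 + (N + m) by omega, Function.iterate_add_apply,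
        Function.iterate_add_apply]

theorem isAttractor_of_disjoint (hf : Continuous f)
    (hback : ∀ x ∈ (A ∪ R)ᶜ, ∀ γ : ℕ → X, γ 0 = x → IsBackwardOrbit f γ → OrbAlpha γ ⊆ R)
    (hA : IsClosed A) (hfA : f '' A = A) (hR : IsClosed R) (hAR : Disjoint A R) :
    IsAttractor f A := by
  obtain ⟨V, hV, hAV, hVR⟩ := normal_exists_closure_subset hA hR.isOpen_compl hAR.subset_compl_right
  replace hVR : Disjoint (closure V) R := subset_compl_iff_disjoint_right.1 hVR
  have hAmaps : MapsTo f A A := mapsTo_iff_image_subset.2 hfA.subset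
  obtain ⟨N₁, hN₁⟩ := exists_forall_iterate_mem hf hback hAmaps hV hAV hVR
  let U := {x | ∀ m, f^[m] x ∈ V}
  let W := ⋂ k ∈ Iic N₁, f^[k] ⁻¹' V
  have hW : IsOpen W := (finite_Iic N₁).isOpen_biInter fun k _ => hV.preimage (hf.iterate k)
  have hWU : W ⊆ U := fun x hx => hN₁ x (by simpa [W] using hx)
  have hAW : A ⊆ W := fun a ha => mem_iInter₂.2 fun k _ => hAV (hAmaps.iterate k ha)
  have hUmaps : MapsTo f U U := fun x hx m => by
    rw [← Function.iterate_succ_apply]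
    exact hx (m + 1)
  have hUV : U ⊆ V := fun x hx => hx 0
  obtain ⟨N₂, hN₂⟩ := exists_iterate_mem_of_forall_mem hf hback isClosed_closure hVR hW hAW
  refine ⟨U, ⟨mapsTo_iff_image_subset.1 hUmaps, N₂ + 1, by omega, ?_⟩,
    (maxInv_eq_of_disjoint hback hfA (hAW.trans hWU) (hVR.mono_left (closure_mono hUV))).symm⟩
  rintro _ ⟨x, hx, rfl⟩
  rw [Function.iterate_succ_apply]
  refine interior_maximal hWU hW (hN₂ _ fun k _ => closure_mono hUV ?_)
  rw [← Function.iterate_succ_apply]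
  exact (hUmaps.closure hf).iterate _ hx

end Converse

/-- Characterization of attractor-repeller pairs. -/
theorem attractor_repeller_pair_iff
    {X : Type*} [MetricSpace X] [CompactSpace X]
    (f : X → X) (hf : Continuous f) (A R : Set X) :
    (IsAttractor f A ∧ R = DualRepeller f A) ↔
      (Disjoint A R ∧ IsCompact A ∧ IsCompact R ∧
        f '' A = A ∧ f '' R ⊆ R ∧
        ∀ x ∈ (A ∪ R)ᶜ,
          OmegaLim f {x} ⊆ A ∧
          ∀ γ : ℕ → X, γ 0 = x → IsBackwardOrbit f γ → OrbAlpha γ ⊆ R) := by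
  constructor
  · rintro ⟨⟨U, hU, rfl⟩, rfl⟩
    rw [hU.maxInv_eq hf, hU.dualRepeller_eq hf]
    have hK := hU.mapsTo_closure hf
    refine ⟨Disjoint.mono hU.iInter_iterate_image_subset_interior (iInter_subset _ 0)
        disjoint_compl_right,
      (isClosed_iInter fun k => isClosed_iterate_image hf isClosed_closure k).isCompact,
      (isClosed_iInter fun k => isOpen_interior.isClosed_compl.preimage (hf.iterate k)).isCompact,
      image_iInter_iterate_image hf isClosed_closure hK, ?_, fun x hx => ⟨?_, ?_⟩⟩
    · rintro _ ⟨x, hx, rfl⟩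
      exact mem_iInter.2 fun k => by
        simpa only [mem_preimage, Function.iterate_succ_apply] using mem_iInter.1 hx (k + 1)
    · have hxR : x ∉ ⋂ k, f^[k] ⁻¹' (interior U)ᶜ := fun h => hx (Or.inr h)
      obtain ⟨k, hk⟩ : ∃ k, f^[k] x ∈ interior U := by simpa using hxR
      exact omegaLim_subset_iInter_iterate_image hf isClosed_closure hK (interior_subset_closure hk)
    · rintro γ rfl hγ
      exact hU.orbAlpha_subset hf hγ fun h => hx (Or.inl h)
  · rintro ⟨hAR, hA, hR, hfA, hfR, hout⟩
    exact ⟨isAttractor_of_disjoint hf (fun x hx => (hout x hx).2) hA.isClosed hfA hR.isClosed hAR,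
      eq_dualRepeller hA.isClosed (mapsTo_iff_image_subset.2 hfA.subset) hR.isClosed
        (mapsTo_iff_image_subset.2 hfR) hAR fun x hx => (hout x hx).1⟩
end

section
/- Let X be a compact metric space and f : X → X a continuous map. If A ⊆ X is an attractor for f and A' ⊆ A is an attractor for the restricted system f|_A : A → A (with the subspace topology on the compact set A), then A' is an attractor for f on X. -/
open Set

lemma maxInv_subset {Y : Type*} (f : Y → Y) (U : Set Y) : MaxInv f U ⊆ U :=
  sUnion_subset fun _ hS => hS.1

lemma subset_maxInv {Y : Type*} {f : Y → Y} {U S : Set Y} (h1 : S ⊆ U) (h2 : f '' S = S) :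
    S ⊆ MaxInv f U := subset_sUnion_of_mem ⟨h1, h2⟩

lemma image_maxInv {Y : Type*} (f : Y → Y) (U : Set Y) : f '' MaxInv f U = MaxInv f U := by
  apply subset_antisymm
  · rintro _ ⟨s, ⟨S, hS, hs⟩, rfl⟩
    exact ⟨S, hS, hS.2 ▸ mem_image_of_mem f hs⟩
  · rintro x ⟨S, hS, hx⟩
    have hx' : x ∈ f '' S := hS.2.symm ▸ hx
    obtain ⟨s, hs, rfl⟩ := hx'
    exact mem_image_of_mem f ⟨S, hS, hs⟩

lemma iterate_image_eq {Y : Type*} {f : Y → Y} {S : Set Y} (h : f '' S = S) (m : ℕ) :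
    f^[m] '' S = S := by
  induction m with
  | zero => simp
  | succ k ih => rw [Function.iterate_succ, Set.image_comp, h, ih]

section Cpt
variable {X : Type*} [MetricSpace X] [CompactSpace X]

lemma mem_image_iInter' {g : X → X} (hg : Continuous g) {K : ℕ → Set X}
    (hdec : ∀ m, K (m+1) ⊆ K m) (hcl : ∀ m, IsClosed (K m)) {y : X}
    (hy : ∀ m, y ∈ g '' K m) : y ∈ g '' ⋂ m, K m := by
  have hne : (⋂ m, (g ⁻¹' {y} ∩ K m)).Nonempty := by
    apply IsCompact.nonempty_iInter_of_sequence_nonempty_isCompact_isClosed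
    · exact fun m => inter_subset_inter_right _ (hdec m)
    · intro m; obtain ⟨x, hx, hgx⟩ := hy m; exact ⟨x, hgx, hx⟩
    · exact ((hcl 0).isCompact).inter_left (isClosed_singleton.preimage hg)
    · exact fun m => (isClosed_singleton.preimage hg).inter (hcl m)
  obtain ⟨x, hx⟩ := hne
  exact ⟨x, mem_iInter.2 fun m => (mem_iInter.1 hx m).2, (mem_iInter.1 hx 0).1⟩

lemma exists_subset_open_of_iInter_subset {K : ℕ → Set X}
    (hdec : ∀ m, K (m+1) ⊆ K m) (hcl : ∀ m, IsClosed (K m)) {O : Set X}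
    (hO : IsOpen O) (h : (⋂ m, K m) ⊆ O) : ∃ m, K m ⊆ O := by
  by_contra hcon
  push_neg at hcon
  have hne : (⋂ m, (K m ∩ Oᶜ)).Nonempty := by
    apply IsCompact.nonempty_iInter_of_sequence_nonempty_isCompact_isClosed
    · exact fun m => inter_subset_inter_left _ (hdec m)
    · intro m; obtain ⟨x, hx, hxO⟩ := not_subset.1 (hcon m); exact ⟨x, hx, hxO⟩
    · exact ((hcl 0).isCompact).inter_right hO.isClosed_compl
    · exact fun m => (hcl m).inter hO.isClosed_compl
  obtain ⟨x, hx⟩ := hne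
  exact (mem_iInter.1 hx 0).2 (h (mem_iInter.2 fun m => (mem_iInter.1 hx m).1))

lemma image_iInter_eq' {f : X → X} (hf : Continuous f) {K : ℕ → Set X}
    (hdec : ∀ m, K (m+1) ⊆ K m) (hcl : ∀ m, IsClosed (K m))
    (him : ∀ m, f '' K m = K (m+1)) : f '' ⋂ m, K m = ⋂ m, K m := by
  apply subset_antisymm
  · rintro _ ⟨x, hx, rfl⟩
    refine mem_iInter.2 fun m => hdec m ?_
    exact (him m) ▸ mem_image_of_mem f (mem_iInter.1 hx m)
  · intro y hy
    refine mem_image_iInter' hf hdec hcl fun m => ?_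
    exact (him m).symm ▸ (mem_iInter.1 hy (m+1))
end Cpt
set_option maxHeartbeats 2000000 in
/-- An attractor of the system restricted to an attractor is an
attractor of the full system. -/
theorem attractor_of_restriction_is_attractor
    {X : Type*} [MetricSpace X] [CompactSpace X]
    (f : X → X) (hf : Continuous f) (A A' : Set X)
    (hA : IsAttractor f A) (hmaps : Set.MapsTo f A A) (hsub : A' ⊆ A)
    (hA' : IsAttractor (Set.MapsTo.restrict f A A hmaps)
      ((Subtype.val : A → X) ⁻¹' A')) :
    IsAttractor f A' := by
  obtain ⟨U, ⟨hUfwd, n₁, hn₁, hUtrap⟩, hAU⟩ := hA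
  obtain ⟨V, ⟨hVfwd, n₂, hn₂, hVtrap⟩, hA'V⟩ := hA'
  set r : A → A := Set.MapsTo.restrict f A A hmaps with hrdef
  set B : Set X := Subtype.val '' V with hBdef
  have hBA : B ⊆ A := by rintro _ ⟨v, _, rfl⟩; exact v.2
  -- commuting of images through val
  have hcomm : ∀ S' : Set A, Subtype.val '' (r '' S') = f '' (Subtype.val '' S') := by
    intro S'
    rw [← Set.image_comp, ← Set.image_comp]
    rfl
  have hriter : ∀ (m : ℕ) (x : A), ((r^[m] x : A) : X) = f^[m] (x : X) := by
    intro m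
    induction m with
    | zero => intro x; rfl
    | succ k ih =>
      intro x
      rw [Function.iterate_succ_apply', Function.iterate_succ_apply']
      show f ((r^[k] x : A) : X) = f (f^[k] (x : X))
      rw [ih x]
  have hitercomm : ∀ (m : ℕ) (S' : Set A),
      Subtype.val '' (r^[m] '' S') = f^[m] '' (Subtype.val '' S') := by
    intro m S'
    rw [← Set.image_comp, ← Set.image_comp]
    exact Set.image_congr fun x _ => hriter m x
  -- B is forward invariant
  have hfB : f '' B ⊆ B := by
    rw [hBdef, ← hcomm]
    exact Set.image_mono hVfwd
  -- A' = MaxInv f B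
  have hA'B : A' = MaxInv f B := by
    have h1 : Subtype.val '' ((Subtype.val : A → X) ⁻¹' A') = A' := by
      rw [Subtype.image_preimage_coe]
      exact inter_eq_self_of_subset_right hsub
    have h2 : Subtype.val '' MaxInv r V = MaxInv f B := by
      apply subset_antisymm
      · rintro _ ⟨x, ⟨S', hS', hx⟩, rfl⟩
        refine ⟨Subtype.val '' S', ⟨Set.image_mono hS'.1, ?_⟩, mem_image_of_mem _ hx⟩
        rw [← hcomm, hS'.2]
      · rintro x ⟨S, ⟨hSB, hSinv⟩, hx⟩
        have hSA : S ⊆ A := hSB.trans hBA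
        have hVpre : (Subtype.val ⁻¹' S : Set A) ⊆ V := by
          intro z hz
          obtain ⟨v, hv, hvz⟩ := hSB hz
          rwa [show v = z from Subtype.val_injective hvz] at hv
        have hrinv : r '' (Subtype.val ⁻¹' S : Set A) = Subtype.val ⁻¹' S := by
          apply subset_antisymm
          · rintro _ ⟨z, hz, rfl⟩
            show ((r z : A) : X) ∈ S
            have : f (z : X) ∈ S := hSinv ▸ mem_image_of_mem f hz
            exact this
          · intro z hz
            have : (z : X) ∈ f '' S := hSinv.symm ▸ hz
            obtain ⟨w, hw, hwz⟩ := this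
            refine ⟨⟨w, hSA hw⟩, hw, ?_⟩
            apply Subtype.val_injective
            exact hwz
        refine ⟨⟨x, hSA hx⟩, ?_, rfl⟩
        exact ⟨Subtype.val ⁻¹' S, ⟨hVpre, hrinv⟩, hx⟩
    rw [← h1, hA'V, h2]
  -- interior of V gives open Oi in X
  obtain ⟨Oi, hOiopen, hOipre⟩ := isOpen_induced_iff.1 (isOpen_interior : IsOpen (interior V))
  have hOiim : Subtype.val '' (interior V) = Oi ∩ A := by
    rw [← hOipre, Subtype.image_preimage_coe, Set.inter_comm]
  have hOiB : Oi ∩ A ⊆ B := by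
    rw [← hOiim]; exact Set.image_mono interior_subset
  -- C = closure B ∩ A
  set C : Set X := closure B ∩ A with hCdef
  have hclV : Subtype.val '' (closure V) = C := by
    rw [Topology.IsInducing.subtypeVal.closure_eq_preimage_closure_image V,
      Subtype.image_preimage_coe, Set.inter_comm]
  have hCtoOi : f^[n₂] '' C ⊆ Oi := by
    rw [← hclV, ← hitercomm]
    intro y hy
    obtain ⟨z, hz, rfl⟩ := hy
    exact (hOiim ▸ Set.image_mono hVtrap (mem_image_of_mem _ hz)).1
  -- the sets D m
  set D : ℕ → Set X := fun m => f^[m] '' closure U with hDdef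
  have hfclU : f '' closure U ⊆ closure U :=
    (image_closure_subset_closure_image hf).trans (closure_mono hUfwd)
  have hDdec : ∀ m, D (m+1) ⊆ D m := by
    intro m
    show f^[m+1] '' closure U ⊆ f^[m] '' closure U
    rw [Function.iterate_succ, Set.image_comp]
    exact Set.image_mono hfclU
  have hDcl : ∀ m, IsClosed (D m) :=
    fun m => ((isClosed_closure.isCompact).image (hf.iterate m)).isClosed
  have hDim : ∀ m, f '' D m = D (m+1) := by
    intro m
    show f '' (f^[m] '' closure U) = f^[m+1] '' closure U
    rw [Function.iterate_succ', Set.image_comp]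
  -- A = ⋂ D m
  have hAeq : A = ⋂ m, D m := by
    apply subset_antisymm
    · intro x hx
      rw [hAU] at hx
      obtain ⟨S, ⟨hSU, hSinv⟩, hxS⟩ := hx
      refine mem_iInter.2 fun m => ?_
      have : x ∈ f^[m] '' S := (iterate_image_eq hSinv m).symm ▸ hxS
      exact Set.image_mono (hSU.trans subset_closure) this
    · have hLinv : f '' ⋂ m, D m = ⋂ m, D m := image_iInter_eq' hf hDdec hDcl hDim
      have hLU : (⋂ m, D m) ⊆ U :=
        ((iInter_subset D n₁).trans hUtrap).trans interior_subset
      rw [hAU]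
      exact subset_maxInv hLU hLinv
  have hAcl : IsClosed A := hAeq ▸ isClosed_iInter hDcl
  have hfA : f '' A = A := hAU ▸ image_maxInv f U
  have hAsubintU : A ⊆ interior U := by
    have h1 : A ⊆ closure U := (hAU ▸ maxInv_subset f U).trans subset_closure
    calc A = f^[n₁] '' A := (iterate_image_eq hfA n₁).symm
    _ ⊆ f^[n₁] '' closure U := Set.image_mono h1
    _ ⊆ interior U := hUtrap
  -- facts about C
  have hCsubA : C ⊆ A := inter_subset_right
  have hCcl : IsClosed C := isClosed_closure.inter hAcl
  have hBC : B ⊆ C := subset_inter subset_closure hBA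
  have hA'bd : A' ⊆ B := hA'B ▸ maxInv_subset f B
  -- G₀
  set G₀ : Set X := f^[n₂] ⁻¹' Oi with hG₀def
  have hG₀open : IsOpen G₀ := hOiopen.preimage (hf.iterate n₂)
  have hCG₀ : C ⊆ G₀ := fun x hx => hCtoOi (mem_image_of_mem _ hx)
  have hG₀key : f^[n₂] '' (A ∩ G₀) ⊆ B := by
    intro y hy
    obtain ⟨x, ⟨hxA, hxG⟩, rfl⟩ := hy
    refine hOiB ⟨hxG, ?_⟩
    exact (iterate_image_eq hfA n₂) ▸ mem_image_of_mem _ hxA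
  -- the compact neighborhood E
  obtain ⟨ε, hε, hEsub⟩ := (hCcl.isCompact).exists_cthickening_subset_open
    (hG₀open.inter isOpen_interior) (subset_inter hCG₀ (hCsubA.trans hAsubintU))
  set E : Set X := Metric.cthickening ε C with hEdef
  have hEcl : IsClosed E := Metric.isClosed_cthickening
  have hEG₀ : E ⊆ G₀ := fun x hx => (hEsub hx).1
  have hEclU : E ⊆ closure U := fun x hx =>
    subset_closure (interior_subset (hEsub hx).2)
  have hCintE : C ⊆ interior E :=
    (Metric.self_subset_thickening hε C).trans
      (interior_maximal (Metric.thickening_subset_cthickening ε C) Metric.isOpen_thickening)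
  -- invariant subsets of E are in A'
  have hinvE : ∀ S : Set X, f '' S = S → S ⊆ E → S ⊆ A' := by
    intro S hSinv hSE
    have hSA : S ⊆ A := by
      rw [hAU]
      refine subset_maxInv ?_ hSinv
      calc S = f^[n₁] '' S := (iterate_image_eq hSinv n₁).symm
      _ ⊆ f^[n₁] '' closure U := Set.image_mono (hSE.trans hEclU)
      _ ⊆ interior U := hUtrap
      _ ⊆ U := interior_subset
    have : S ⊆ B := by
      calc S = f^[n₂] '' S := (iterate_image_eq hSinv n₂).symm
      _ ⊆ f^[n₂] '' (A ∩ G₀) := Set.image_mono (subset_inter hSA (hSE.trans hEG₀))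
      _ ⊆ B := hG₀key
    rw [hA'B]
    exact subset_maxInv this hSinv
  -- main uniform claim
  have hT : ∃ T : ℕ, ∀ x : X, (∀ j ≤ T, f^[j] x ∈ E) → f^[T+1] x ∈ interior E := by
    by_contra hcon
    push_neg at hcon
    set WT : ℕ → Set X := fun T => {x | ∀ j ≤ T, f^[j] x ∈ E} with hWTdef
    have hWTcl : ∀ T, IsClosed (WT T) := by
      intro T
      have : WT T = ⋂ j, ⋂ (_ : j ≤ T), f^[j] ⁻¹' E := by
        ext x; simp [hWTdef]
      rw [this]
      exact isClosed_iInter fun j => isClosed_iInter fun _ => hEcl.preimage (hf.iterate j)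
    have hWTfwd : ∀ T, f '' WT (T+1) ⊆ WT T := by
      rintro T _ ⟨x, hx, rfl⟩
      intro j hj
      rw [← Function.iterate_succ_apply]
      exact hx (j+1) (by omega)
    set Q : ℕ → Set X := fun T => f^[T+1] '' WT T ∩ (interior E)ᶜ with hQdef
    have hQcpt : ∀ T, IsCompact (Q T) :=
      fun T => (((hWTcl T).isCompact).image (hf.iterate (T+1))).inter_right
        isOpen_interior.isClosed_compl
    have hQdec : ∀ T, Q (T+1) ⊆ Q T := by
      intro T
      apply inter_subset_inter_left
      have : f^[T+1+1] '' WT (T+1) = f^[T+1] '' (f '' WT (T+1)) := by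
        rw [Function.iterate_succ, Set.image_comp]
      rw [this]
      exact Set.image_mono (hWTfwd T)
    have hQne : ∀ T, (Q T).Nonempty := by
      intro T
      obtain ⟨x, hx1, hx2⟩ := hcon T
      exact ⟨f^[T+1] x, mem_image_of_mem _ hx1, hx2⟩
    obtain ⟨y, hy⟩ := IsCompact.nonempty_iInter_of_sequence_nonempty_isCompact_isClosed
      Q hQdec hQne (hQcpt 0) (fun T => (hQcpt T).isClosed)
    have hyQ : ∀ T, y ∈ f^[T+1] '' WT T ∧ y ∉ interior E := fun T => mem_iInter.1 hy T
    set t : ℕ := n₂ + 1 with htdef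
    set P : ℕ → Set X := fun s => f^[s+1] '' WT (s + t) with hPdef
    have hPy : ∀ s, y ∈ f^[t] '' P s := by
      intro s
      have h1 : f^[s+t+1] '' WT (s+t) = f^[t] '' (f^[s+1] '' WT (s+t)) := by
        rw [show s+t+1 = t+(s+1) from by omega, Function.iterate_add, Set.image_comp]
      exact h1 ▸ (hyQ (s+t)).1
    have hPdec : ∀ s, P (s+1) ⊆ P s := by
      intro s
      show f^[s+1+1] '' WT (s+1+t) ⊆ f^[s+1] '' WT (s+t)
      rw [Function.iterate_succ, Set.image_comp]
      refine Set.image_mono ?_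
      have : s + 1 + t = (s + t) + 1 := by omega
      rw [this]
      exact hWTfwd (s+t)
    have hPcl : ∀ s, IsClosed (P s) :=
      fun s => (((hWTcl _).isCompact).image (hf.iterate (s+1))).isClosed
    have hPE : ∀ s, P s ⊆ E := by
      rintro s _ ⟨x, hx, rfl⟩
      exact hx (s+1) (by omega)
    have hPD : ∀ s, P s ⊆ D (s+1) := by
      intro s
      refine Set.image_mono fun x hx => ?_
      exact hEclU (hx 0 (by omega))
    have hyR : y ∈ f^[t] '' ⋂ s, P s := mem_image_iInter' (hf.iterate t) hPdec hPcl hPy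
    have hRA : (⋂ s, P s) ⊆ A := by
      rw [hAeq]
      refine fun x hx => mem_iInter.2 fun m => ?_
      exact hDdec m (hPD m (mem_iInter.1 hx m))
    have hRE : (⋂ s, P s) ⊆ E := (iInter_subset P 0).trans (hPE 0)
    have hyB : y ∈ f '' B := by
      obtain ⟨x, hx, rfl⟩ := hyR
      have h2 : f^[t] x = f (f^[n₂] x) := by
        rw [htdef, Function.iterate_succ_apply']
      rw [h2]
      refine mem_image_of_mem f (hG₀key (mem_image_of_mem _ ?_))
      exact ⟨hRA hx, hEG₀ (hRE hx)⟩
    exact (hyQ 0).2 (hCintE (hBC (hfB hyB)))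
  obtain ⟨T, hT⟩ := hT
  have hfA' : f '' A' = A' := hA'B ▸ image_maxInv f B
  set G : Set X := {x | ∀ j ≤ T, f^[j] x ∈ interior E} with hGdef
  have hGopen : IsOpen G := by
    have : G = ⋂ j ∈ Set.Iic T, f^[j] ⁻¹' interior E := by
      ext x; simp [hGdef, Set.mem_Iic]
    rw [this]
    exact (Set.finite_Iic T).isOpen_biInter fun j _ => isOpen_interior.preimage (hf.iterate j)
  have hA'G : A' ⊆ G := by
    intro x hx j hj
    have : f^[j] x ∈ A' := (iterate_image_eq hfA' j) ▸ mem_image_of_mem _ hx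
    exact hCintE (hBC (hA'bd this))
  have hGfwd : ∀ x ∈ G, f x ∈ G := by
    intro x hx j hj
    rw [← Function.iterate_succ_apply]
    rcases Nat.lt_or_ge j T with h | h
    · exact hx (j+1) (by omega)
    · have hjT : j = T := by omega
      subst hjT
      exact hT x fun k hk => interior_subset (hx k hk)
  have hGiter : ∀ (m : ℕ) (x : X), x ∈ G → f^[m] x ∈ G := by
    intro m
    induction m with
    | zero => intro x hx; exact hx
    | succ k ih =>
      intro x hx
      rw [Function.iterate_succ_apply']
      exact hGfwd _ (ih x hx)
  -- the trapping region W
  set W : Set X := ⋂ m, f^[m] ⁻¹' E with hWdef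
  have hWcl : IsClosed W := isClosed_iInter fun m => hEcl.preimage (hf.iterate m)
  have hWE : W ⊆ E := by
    intro x hx
    exact mem_iInter.1 hx 0
  have hfW : f '' W ⊆ W := by
    rintro _ ⟨x, hx, rfl⟩
    refine mem_iInter.2 fun m => ?_
    show f^[m] (f x) ∈ E
    rw [← Function.iterate_succ_apply]
    exact mem_iInter.1 hx (m+1)
  have hGW : G ⊆ W := by
    intro x hx
    refine mem_iInter.2 fun m => ?_
    show f^[m] x ∈ E
    exact interior_subset ((hGiter m x hx) 0 (Nat.zero_le T))
  have hA'intW : A' ⊆ interior W := hA'G.trans (interior_maximal hGW hGopen)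
  have hMaxW : MaxInv f W = A' := by
    apply subset_antisymm
    · exact hinvE _ (image_maxInv f W) ((maxInv_subset f W).trans hWE)
    · exact subset_maxInv (hA'G.trans hGW) hfA'
  -- W is a trapping region
  set F : ℕ → Set X := fun m => f^[m] '' W with hFdef
  have hFdec : ∀ m, F (m+1) ⊆ F m := by
    intro m
    show f^[m+1] '' W ⊆ f^[m] '' W
    rw [Function.iterate_succ, Set.image_comp]
    exact Set.image_mono hfW
  have hFcl : ∀ m, IsClosed (F m) :=
    fun m => ((hWcl.isCompact).image (hf.iterate m)).isClosed
  have hFim : ∀ m, f '' F m = F (m+1) := by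
    intro m
    show f '' (f^[m] '' W) = f^[m+1] '' W
    rw [Function.iterate_succ', Set.image_comp]
  have hFint : (⋂ m, F m) ⊆ interior W := by
    have hinv : f '' ⋂ m, F m = ⋂ m, F m := image_iInter_eq' hf hFdec hFcl hFim
    have hsubW : (⋂ m, F m) ⊆ W := by
      have : F 0 = W := by simp [hFdef]
      exact this ▸ iInter_subset F 0
    have : (⋂ m, F m) ⊆ A' := hinvE _ hinv (hsubW.trans hWE)
    exact this.trans hA'intW
  obtain ⟨m, hm⟩ := exists_subset_open_of_iInter_subset hFdec hFcl isOpen_interior hFint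
  have hFanti : ∀ a b : ℕ, a ≤ b → F b ⊆ F a := by
    intro a b hab
    induction hab with
    | refl => exact subset_rfl
    | step h ih => exact (hFdec _).trans ih
  refine ⟨W, ⟨hfW, max m 1, le_max_right _ _, ?_⟩, hMaxW.symm⟩
  rw [hWcl.closure_eq]
  exact (hFanti m (max m 1) (le_max_left _ _)).trans hm
end

section
/- Let X be a compact metric space and f : X → X a continuous map, and let N ⊆ X be a compact subset. Suppose (x_n) is a sequence in N converging to x ∈ N, and (τ_n) is a sequence of natural numbers with τ_n → ∞, such that for each n there exist points y_0 = x_n, y_1, …, y_{τ_n} in N with f(y_{k+1}) = y_k for all 0 ≤ k < τ_n. Then there exists a backward orbit γ : ℕ → X through x with γ(k) ∈ N for all k ∈ ℕ. -/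
open Set

/-- Limits of longer and longer backward orbit segments in a
compact set yield a complete backward orbit. -/
theorem backward_orbit_from_segments
    {X : Type*} [MetricSpace X] [CompactSpace X]
    (f : X → X) (hf : Continuous f) (N : Set X) (hN : IsCompact N)
    (x : X) (hx : x ∈ N) (xs : ℕ → X) (hxs : ∀ n, xs n ∈ N)
    (hlim : Filter.Tendsto xs Filter.atTop (nhds x))
    (τ : ℕ → ℕ) (hτ : Filter.Tendsto τ Filter.atTop Filter.atTop)
    (hseg : ∀ n : ℕ, ∃ y : ℕ → X, y 0 = xs n ∧
      (∀ k < τ n, f (y (k + 1)) = y k) ∧ ∀ k ≤ τ n, y k ∈ N) :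
    ∃ γ : ℕ → X, γ 0 = x ∧ IsBackwardOrbit f γ ∧ ∀ k : ℕ, γ k ∈ N := by
  choose y hy0 hyrec hyN using hseg
  set g : ℕ → ℕ → X := fun n k => if k ≤ τ n then y n k else x with hg
  have hgN : ∀ n k, g n k ∈ N := by
    intro n k
    by_cases h : k ≤ τ n
    · simpa [g, h] using hyN n k h
    · simpa [g, h] using hx
  have hNc : IsCompact {u : ℕ → X | ∀ k, u k ∈ N} :=
    isCompact_pi_infinite (fun _ => hN)
  obtain ⟨γ, hγN, φ, hφ, hconv⟩ := hNc.isSeqCompact (fun n k => hgN n k)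
  have hconv' : ∀ k, Filter.Tendsto (fun n => g (φ n) k) Filter.atTop (nhds (γ k)) := by
    rw [tendsto_pi_nhds] at hconv
    exact hconv
  have hτφ : Filter.Tendsto (fun n => τ (φ n)) Filter.atTop Filter.atTop :=
    hτ.comp hφ.tendsto_atTop
  refine ⟨γ, ?_, ?_, hγN⟩
  · have h0 : (fun n => g (φ n) 0) = fun n => xs (φ n) := by
      funext n; simp [g, hy0]
    have := hconv' 0
    rw [h0] at this
    exact tendsto_nhds_unique this (hlim.comp hφ.tendsto_atTop)
  · intro k
    have hev : ∀ᶠ n in Filter.atTop, f (g (φ n) (k + 1)) = g (φ n) k := by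
      filter_upwards [hτφ.eventually_ge_atTop (k + 1)] with n hn
      have hk1 : k + 1 ≤ τ (φ n) := hn
      have hk : k ≤ τ (φ n) := le_trans (Nat.le_succ k) hk1
      simp only [g, if_pos hk1, if_pos hk]
      exact hyrec (φ n) k hk1
    have h1 : Filter.Tendsto (fun n => f (g (φ n) (k + 1))) Filter.atTop
        (nhds (f (γ (k + 1)))) := (hf.tendsto _).comp (hconv' (k + 1))
    have h2 : Filter.Tendsto (fun n => f (g (φ n) (k + 1))) Filter.atTop (nhds (γ k)) :=
      (hconv' k).congr' (hev.mono fun n h => h.symm)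
    exact tendsto_nhds_unique h1 h2
end

section
/- Let X be a compact metric space and f : X → X a continuous map. If U ⊆ X is a trapping region, then Inv(U) = Inv(cl(U)) = ω(U), and this set is compact. -/
open Set

/-!
Every invariant set `S ⊆ cl U` satisfies `S = f^[n] '' S ⊆ f^[n] '' cl U ⊆ int U`, so `U` and
`cl U` have the same invariant subsets. An invariant `S ⊆ U` lies in every image `f^[m] '' U`,
hence in `ω(U)`. Conversely, `ω(U) ⊆ cl U` because `U` is forward invariant, and `ω(U)` is
itself invariant: `f` maps the closure of each tail onto the closure of the next, and by
Cantor's intersection theorem images commute with decreasing intersections of compact sets.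
So `ω(U)` is the largest invariant subset of `U`, and it is closed, hence compact.
-/

open Function

section Iterate

variable {Y : Type*} {f : Y → Y} {S U V : Set Y}

theorem iterate_image_eq_of_image_eq (hS : f '' S = S) (n : ℕ) : f^[n] '' S = S := by
  rw [image_iterate_eq]
  exact iterate_fixed hS n

theorem subset_maxInv_s13 (hSU : S ⊆ U) (hS : f '' S = S) : S ⊆ MaxInv f U :=
  subset_sUnion_of_mem ⟨hSU, hS⟩

theorem maxInv_mono (hUV : U ⊆ V) : MaxInv f U ⊆ MaxInv f V :=
  sUnion_subset fun _ ⟨hSU, hS⟩ => subset_maxInv_s13 (hSU.trans hUV) hS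

theorem image_iUnion_ge_iterate_image (U : Set Y) (n : ℕ) :
    f '' ⋃ m ≥ n, f^[m] '' U = ⋃ m ≥ n + 1, f^[m] '' U := by
  ext y
  simp only [mem_image, mem_iUnion, exists_prop]
  constructor
  · rintro ⟨_, ⟨m, hm, x, hx, rfl⟩, rfl⟩
    exact ⟨m + 1, by omega, x, hx, iterate_succ_apply' f m x⟩
  · rintro ⟨_ | m, hm, x, hx, rfl⟩
    · omega
    · exact ⟨f^[m] x, ⟨m, by omega, x, hx, rfl⟩, (iterate_succ_apply' f m x).symm⟩

theorem maxInv_subset_omegaLim [TopologicalSpace Y] : MaxInv f U ⊆ OmegaLim f U :=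
  sUnion_subset fun S ⟨hSU, hS⟩ => subset_iInter fun n => calc
    S = f^[n] '' S := (iterate_image_eq_of_image_eq hS n).symm
    _ ⊆ ⋃ m ≥ n, f^[m] '' U :=
      (image_mono hSU).trans (subset_iUnion₂ (s := fun m (_ : m ≥ n) => f^[m] '' U) n le_rfl)
    _ ⊆ closure _ := subset_closure

end Iterate

section OmegaLim

variable {Y : Type*} [TopologicalSpace Y] {f : Y → Y}

theorem isClosed_omegaLim (U : Set Y) : IsClosed (OmegaLim f U) :=
  isClosed_iInter fun _ => isClosed_closure

theorem omegaLim_subset_closure {U : Set Y} (hU : f '' U ⊆ U) : OmegaLim f U ⊆ closure U :=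
  (iInter_subset _ 0).trans <| closure_mono <| iUnion₂_subset fun m _ =>
    ((mapsTo_iff_image_subset.2 hU).iterate m).image_subset

theorem Continuous.image_iInter_of_antitone [CompactSpace Y] {Z : Type*} [TopologicalSpace Z]
    [T1Space Z] {g : Y → Z} (hg : Continuous g) {K : ℕ → Set Y} (hK : Antitone K)
    (hKc : ∀ n, IsClosed (K n)) : g '' ⋂ n, K n = ⋂ n, g '' K n := by
  refine (image_iInter_subset K g).antisymm fun z hz => ?_
  have hfibre : ∀ n, IsClosed (g ⁻¹' {z} ∩ K n) := fun n =>
    (isClosed_singleton.preimage hg).inter (hKc n)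
  obtain ⟨y, hy⟩ := IsCompact.nonempty_iInter_of_sequence_nonempty_isCompact_isClosed
    (fun n => g ⁻¹' {z} ∩ K n) (fun n => inter_subset_inter_right _ (hK n.le_succ))
    (fun n => by obtain ⟨y, hy, rfl⟩ := mem_iInter.1 hz n; exact ⟨y, rfl, hy⟩)
    (hfibre 0).isCompact hfibre
  simp only [mem_iInter, mem_inter_iff, mem_preimage, mem_singleton_iff] at hy
  exact ⟨y, mem_iInter.2 fun n => (hy n).2, (hy 0).1⟩

theorem image_omegaLim [CompactSpace Y] [T2Space Y] (hf : Continuous f) (U : Set Y) :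
    f '' OmegaLim f U = OmegaLim f U := by
  set K : ℕ → Set Y := fun n => closure (⋃ m ≥ n, f^[m] '' U)
  have hK : Antitone K := fun n k hnk =>
    closure_mono <| biUnion_mono (fun m (hm : k ≤ m) => (hnk.trans hm : n ≤ m)) fun _ _ => le_rfl
  -- `f` is a closed map, so it maps the closure of a tail onto the closure of the next tail.
  have hfK : ∀ n, f '' K n = K (n + 1) := fun n => by
    rw [← hf.isClosedMap.closure_image_eq_of_continuous hf, image_iUnion_ge_iterate_image]
  calc f '' OmegaLim f U = ⋂ n, f '' K n :=
        hf.image_iInter_of_antitone hK fun _ => isClosed_closure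
    _ = ⋂ n, K (n + 1) := by simp only [hfK]
    _ = OmegaLim f U := hK.iInter_nat_add 1

end OmegaLim

theorem IsTrappingRegion.subset_interior_of_image_eq {Y : Type*} [TopologicalSpace Y]
    {f : Y → Y} {U S : Set Y} (hU : IsTrappingRegion f U) (hSU : S ⊆ closure U)
    (hS : f '' S = S) : S ⊆ interior U := by
  obtain ⟨-, n, -, hn⟩ := hU
  calc S = f^[n] '' S := (iterate_image_eq_of_image_eq hS n).symm
    _ ⊆ f^[n] '' closure U := image_mono hSU
    _ ⊆ interior U := hn

theorem IsTrappingRegion.maxInv_closure_eq {Y : Type*} [TopologicalSpace Y] {f : Y → Y}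
    {U : Set Y} (hU : IsTrappingRegion f U) : MaxInv f (closure U) = MaxInv f U :=
  (maxInv_mono subset_closure).antisymm' <| sUnion_subset fun _ ⟨hSU, hS⟩ =>
    subset_maxInv_s13 ((hU.subset_interior_of_image_eq hSU hS).trans interior_subset) hS

/-- For a trapping region `U`, `Inv(U) = Inv(cl U) = ω(U)` is
compact. -/
theorem trappingRegion_maxInv_eq_omega
    {X : Type*} [MetricSpace X] [CompactSpace X]
    (f : X → X) (hf : Continuous f) (U : Set X) (hU : IsTrappingRegion f U) :
    MaxInv f U = MaxInv f (closure U) ∧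
    MaxInv f U = OmegaLim f U ∧
    IsCompact (MaxInv f U) := by
  have hclosure : MaxInv f (closure U) = MaxInv f U := hU.maxInv_closure_eq
  have homega : OmegaLim f U ⊆ MaxInv f U :=
    hclosure ▸ subset_maxInv_s13 (omegaLim_subset_closure hU.1) (image_omegaLim hf U)
  have heq : MaxInv f U = OmegaLim f U := maxInv_subset_omegaLim.antisymm homega
  exact ⟨hclosure.symm, heq, heq ▸ (isClosed_omegaLim U).isCompact⟩
end
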